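/- Let I⁰ and ⟨I⁰_α⟩ be as above. For every limit ordinal δ < κ and every ν ∈ I⁰ there exists β < δ such that for all σ ∈ I⁰_δ, if σ > ν then there exists σ' ∈ I⁰_β with σ ≥ σ' ≥ ν. -/

import Mathlib

def I0 (κ : Cardinal) : Set (ℕ → Ordinal × ℚ) :=
  {f | (∀ n, (f n).1 < κ.ord) ∧ {n | (f n).1 ≠ 0}.Finite}

def I0lt (f g : ℕ → Ordinal × ℚ) : Prop :=
  ∃ n : ℕ, (∀ m, m < n → f m = g m) ∧
    ((f n).1 < (g n).1 ∨ ((f n).1 = (g n).1 ∧ (f n).2 < (g n).2))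

/-- The reflexive closure `f ≤ g` of the comparison on `I⁰`. -/
def I0le (f g : ℕ → Ordinal × ℚ) : Prop := I0lt f g ∨ f = g

def I0filt (κ : Cardinal) (γ : Ordinal) : Set (ℕ → Ordinal × ℚ) :=
  {f | f ∈ I0 κ ∧ ∀ n, (f n).1 < γ}

/-!
If `ν < σ` with `σ ∈ I⁰_δ`, and `k` is the first index where they differ, then every `ν m` with
`m ≤ k` has first coordinate below `δ`. Since `ν` takes only finitely many values, a single
`β < δ` bounds all first coordinates of `ν` that lie below `δ`. The witness `σ'` agrees with `ν`
before `k`, is `((ν k).1, q)` at `k` for a rational `q` with `ν k < ((ν k).1, q) < σ k`, and is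
zero after `k`; it lies in `I⁰_β`.
-/

theorem Order.IsSuccLimit.exists_forall_lt_of_finite {α : Type*} [LinearOrder α] {δ : α}
    (hδ : Order.IsSuccLimit δ) {s : Set α} (hs : s.Finite) (hsδ : ∀ x ∈ s, x < δ) :
    ∃ β < δ, ∀ x ∈ s, x < β := by
  induction s, hs using Set.Finite.induction_on with
  | empty =>
    obtain ⟨β, hβ⟩ := not_isMin_iff.mp hδ.not_isMin
    exact ⟨β, hβ, by simp⟩
  | @insert a s _ _ ih =>
    obtain ⟨β, hβδ, hβ⟩ := ih fun x hx => hsδ x (Set.mem_insert_of_mem a hx)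
    obtain ⟨γ, hγδ, hγ⟩ :=
      hδ.lt_iff_exists_lt.mp (max_lt (hsδ a (Set.mem_insert a s)) hβδ)
    refine ⟨γ, hγδ, ?_⟩
    rintro x (rfl | hx)
    · exact (le_max_left _ _).trans_lt hγ
    · exact (hβ x hx).trans ((le_max_right _ _).trans_lt hγ)

theorem finite_range_fst_of_mem_I0 {κ : Cardinal} {ν : ℕ → Ordinal × ℚ} (hν : ν ∈ I0 κ) :
    (Set.range fun n => (ν n).1).Finite := by
  refine ((hν.2.image fun n => (ν n).1).insert 0).subset ?_
  rintro _ ⟨n, rfl⟩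
  by_cases hn : (ν n).1 = 0
  · exact Or.inl hn
  · exact Or.inr ⟨n, hn, rfl⟩

def I0truncate (ν : ℕ → Ordinal × ℚ) (k : ℕ) (q : ℚ) : ℕ → Ordinal × ℚ :=
  fun m => if m < k then ν m else if m = k then ((ν k).1, q) else (0, 0)

section I0truncate

variable {ν σ : ℕ → Ordinal × ℚ} {k : ℕ} {q : ℚ}

theorem I0truncate_of_lt {m : ℕ} (hm : m < k) : I0truncate ν k q m = ν m := if_pos hm

theorem I0truncate_self : I0truncate ν k q k = ((ν k).1, q) := by
  simp [I0truncate]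

theorem I0truncate_of_gt {m : ℕ} (hm : k < m) : I0truncate ν k q m = (0, 0) := by
  simp [I0truncate, hm.not_gt, hm.ne']

theorem I0truncate_mem_I0filt {κ : Cardinal} {β : Ordinal} (hβκ : β ≤ κ.ord) (hβ : 0 < β)
    (hν : ∀ m ≤ k, (ν m).1 < β) : I0truncate ν k q ∈ I0filt κ β := by
  have hlt : ∀ m, (I0truncate ν k q m).1 < β := by
    intro m
    rcases lt_trichotomy m k with hm | rfl | hm
    · rw [I0truncate_of_lt hm]; exact hν m hm.le
    · rw [I0truncate_self]; exact hν m le_rfl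
    · rw [I0truncate_of_gt hm]; exact hβ
  refine ⟨⟨fun m => (hlt m).trans_le hβκ, (Set.finite_le_nat k).subset fun m hm => ?_⟩, hlt⟩
  by_contra! hkm
  exact hm (by rw [I0truncate_of_gt (not_le.mp hkm)])

theorem I0lt_I0truncate (hq : (ν k).2 < q) : I0lt ν (I0truncate ν k q) :=
  ⟨k, fun m hm => (I0truncate_of_lt hm).symm, Or.inr (by rw [I0truncate_self]; exact ⟨rfl, hq⟩)⟩

theorem I0truncate_I0lt (hagree : ∀ m < k, ν m = σ m)
    (hq : (ν k).1 < (σ k).1 ∨ ((ν k).1 = (σ k).1 ∧ q < (σ k).2)) : I0lt (I0truncate ν k q) σ :=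
  ⟨k, fun m hm => (I0truncate_of_lt hm).trans (hagree m hm), by rwa [I0truncate_self]⟩

end I0truncate

theorem exists_rat_between_of_lex_lt {a b : Ordinal × ℚ}
    (h : a.1 < b.1 ∨ (a.1 = b.1 ∧ a.2 < b.2)) :
    ∃ q : ℚ, a.2 < q ∧ (a.1 < b.1 ∨ (a.1 = b.1 ∧ q < b.2)) := by
  rcases h with h | ⟨h, h₂⟩
  · exact ⟨a.2 + 1, lt_add_one _, Or.inl h⟩
  · obtain ⟨q, hq₁, hq₂⟩ := exists_between h₂
    exact ⟨q, hq₁, Or.inr ⟨h, hq₂⟩⟩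

theorem I0_niceness_lemma_general (κ : Cardinal) :
    ∀ δ : Ordinal, δ < κ.ord → Order.IsSuccLimit δ →
      ∀ ν ∈ I0 κ,
        ∃ β < δ, ∀ σ ∈ I0filt κ δ, I0lt ν σ →
          ∃ σ' ∈ I0filt κ β, I0le σ' σ ∧ I0le ν σ' := by
  intro δ hδκ hδ ν hν
  obtain ⟨β, hβδ, hβ⟩ := hδ.exists_forall_lt_of_finite
    (((finite_range_fst_of_mem_I0 hν).inter_of_left (Set.Iio δ)).insert 0)
    (by rintro x (rfl | ⟨-, hx⟩); exacts [hδ.pos, hx])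
  refine ⟨β, hβδ, fun σ hσ ⟨k, hagree, hk⟩ => ?_⟩
  have hνδ : ∀ m ≤ k, (ν m).1 < δ := by
    intro m hm
    rcases hm.lt_or_eq with hm | rfl
    · rw [hagree m hm]; exact hσ.2 m
    · exact (hk.elim le_of_lt fun h => h.1.le).trans_lt (hσ.2 m)
  obtain ⟨q, hνq, hqσ⟩ := exists_rat_between_of_lex_lt hk
  refine ⟨I0truncate ν k q, I0truncate_mem_I0filt (hβδ.trans hδκ).le
      (hβ 0 (Set.mem_insert 0 _)) fun m hm => hβ _ (Or.inr ⟨⟨m, rfl⟩, hνδ m hm⟩),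
    Or.inl (I0truncate_I0lt hagree hqσ), Or.inl (I0lt_I0truncate hνq)⟩

/-- for every limit `δ < κ` and every `ν ∈ I⁰` there is `β < δ`
such that every `σ ∈ I⁰_δ` with `σ > ν` admits `σ' ∈ I⁰_β` with `σ ≥ σ' ≥ ν`. -/
theorem I0_niceness_lemma (κ : Cardinal) (hreg : κ.IsRegular)
    (hunc : Cardinal.aleph0 < κ) :
    ∀ δ : Ordinal, δ < κ.ord → Order.IsSuccLimit δ →
      ∀ ν ∈ I0 κ,
        ∃ β < δ, ∀ σ ∈ I0filt κ δ, I0lt ν σ →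
          ∃ σ' ∈ I0filt κ β, I0le σ' σ ∧ I0le ν σ' :=
  I0_niceness_lemma_general κ
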